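/- arXiv:2306.09643 — 2 statements merged into one kernel-verified Lean document; each statement's English description precedes it below -/
import Mathlib

section
/- Let p_i^0, p_i^1 for i = 1,…,K be strictly positive probability densities on ℝ. For a, b ∈ {0,1}^K, if ∏_{i=1}^K p_i^{a_i}(x_i) = ∏_{i=1}^K p_i^{b_i}(x_i) for all x ∈ ℝ^K, and for each i the densities p_i^0 and p_i^1 are distinct (differ on a set of positive measure), then a = b. -/
open MeasureTheory

theorem Fintype.prod_apply_update {ι α M : Type*} [DecidableEq ι] [Fintype ι] [CommMonoid M]
    (f : ι → α → M) (x : ι → α) (i : ι) (t : α) :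
    ∏ j, f j (Function.update x i t j) = f i t * ∏ j ∈ Finset.univ \ {i}, f j (x j) := by
  simp only [Function.apply_update f, Finset.prod_update_of_mem (Finset.mem_univ i)]

theorem eq_of_mul_const_eq_of_integral_eq_one {α : Type*} [MeasurableSpace α] {μ : Measure α}
    {f g : α → ℝ} {c d : ℝ} (hc : c ≠ 0) (hf : ∫ x, f x ∂μ = 1) (hg : ∫ x, g x ∂μ = 1)
    (h : ∀ x, f x * c = g x * d) : f = g := by
  have hcd : c = d := by
    simpa [integral_mul_const, hf, hg] using congrArg (fun u : α → ℝ => ∫ x, u x ∂μ) (funext h)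
  subst hcd
  exact funext fun x => mul_right_cancel₀ hc (h x)

theorem Bool.apply_false_eq_apply_true_of_ne {β : Sort*} {f : Bool → β} {s t : Bool}
    (hst : s ≠ t) (h : f s = f t) : f false = f true := by
  cases s <;> cases t <;> simp_all

theorem distinct_interaction_cases_give_distinct_joints_general
    (K : ℕ) (p : Fin K → Bool → ℝ → ℝ)
    (hpos : ∀ i s x, 0 < p i s x)
    (hI : ∀ i s, ∫ x, p i s x = 1)
    (hdist : ∀ i, 0 < volume {x : ℝ | p i false x ≠ p i true x})
    (a b : Fin K → Bool)
    (h : ∀ x : Fin K → ℝ, ∏ i, p i (a i) (x i) = ∏ i, p i (b i) (x i)) :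
    a = b := by
  funext i
  by_contra hne
  -- Freeze every coordinate but the `i`-th at `0`: the `i`-th marginals are then proportional.
  have hslice : ∀ t, p i (a i) t * ∏ j ∈ Finset.univ \ {i}, p j (a j) 0
      = p i (b i) t * ∏ j ∈ Finset.univ \ {i}, p j (b j) 0 := fun t => by
    simpa only [Fintype.prod_apply_update, Pi.zero_apply] using h (Function.update 0 i t)
  have hc : ∏ j ∈ Finset.univ \ {i}, p j (a j) 0 ≠ 0 :=
    (Finset.prod_pos fun j _ => hpos j _ 0).ne'
  have hpi : p i (a i) = p i (b i) :=
    eq_of_mul_const_eq_of_integral_eq_one hc (hI i _) (hI i _) hslice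
  have hft : p i false = p i true := Bool.apply_false_eq_apply_true_of_ne hne hpi
  simpa [hft] using hdist i

theorem distinct_interaction_cases_give_distinct_joints
    (K : ℕ) (p : Fin K → Bool → ℝ → ℝ)
    (hmeas : ∀ i s, Measurable (p i s))
    (hpos : ∀ i s x, 0 < p i s x)
    (hInt : ∀ i s, Integrable (p i s))
    (hI : ∀ i s, ∫ x, p i s x = 1)
    (hdist : ∀ i, 0 < volume {x : ℝ | p i false x ≠ p i true x})
    (a b : Fin K → Bool)
    (h : ∀ x : Fin K → ℝ, ∏ i, p i (a i) (x i) = ∏ i, p i (b i) (x i)) :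
    a = b :=
  distinct_interaction_cases_give_distinct_joints_general K p hpos hI hdist a b h
end

section
/- There exist n = ⌊log₂ K⌋ + 2 binary vectors E₁,…,E_n ∈ {0,1}^K such that the columns are pairwise distinct interaction patterns: for all i ≠ j in {1,…,K} and every function b : {0,1} → {0,1}, there exists some m with (E_m)_i ≠ b((E_m)_j), and additionally for every i there exist m, m' with (E_m)_i = 0 and (E_{m'})_i = 1. -/
/-!
Give each variable a distinct word of `⌊log₂ K⌋ + 1` bits other than the all-`true` word (possible
since `K < 2 ^ (⌊log₂ K⌋ + 1)`), and prepend a coordinate that is `true` for every variable. The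
common `true` coordinate rules out every `b` with `b true = false`; if `b = id`, two distinct words
differ in some bit; if `b` is constantly `true`, a `false` bit of the first word does.
-/

open Function Matrix

theorem nonempty_embedding_ne_const_true {ι : Type*} [Fintype ι] {n : ℕ}
    (h : Fintype.card ι < 2 ^ n) : Nonempty (ι ↪ {v : Fin n → Bool // v ≠ fun _ => true}) :=
  Function.Embedding.nonempty_of_card_le <| by
    simp only [Fintype.card_subtype_compl, Fintype.card_pi, Fintype.card_bool,
      Finset.prod_const, Finset.card_univ, Fintype.card_fin, Fintype.card_unique]
    omega

theorem exists_vecCons_true_ne_apply {ι : Type*} {n : ℕ} {p : ι → Fin n → Bool}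
    (hp : Injective p) (hfalse : ∀ i, ∃ m, p i m = false) {i j : ι} (hij : i ≠ j)
    (b : Bool → Bool) : ∃ m, vecCons true (p i) m ≠ b (vecCons true (p j) m) := by
  cases hbt : b true
  · exact ⟨0, by simp [hbt]⟩
  cases hbf : b false
  · obtain ⟨m, hm⟩ : ∃ m, p i m ≠ p j m := by
      by_contra! h
      exact hij (hp (funext h))
    refine ⟨m.succ, ?_⟩
    cases hj : p j m <;> simp_all
  · obtain ⟨m, hm⟩ := hfalse i
    refine ⟨m.succ, ?_⟩
    cases hj : p j m <;> simp [hj, hm, hbt, hbf]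

theorem log_regimes_suffice_for_distinct_patterns_general (K : ℕ) :
    ∃ E : Fin (Nat.log 2 K + 2) → Fin K → Bool,
      (∀ i j : Fin K, i ≠ j → ∀ b : Bool → Bool, ∃ m, E m i ≠ b (E m j)) ∧
      (∀ i : Fin K, (∃ m, E m i = false) ∧ (∃ m', E m' i = true)) := by
  obtain ⟨f⟩ := nonempty_embedding_ne_const_true (ι := Fin K)
    (by simpa using Nat.lt_pow_succ_log_self one_lt_two K)
  have hp : Injective fun i => (f i).1 := Subtype.val_injective.comp f.injective
  have hfalse (i : Fin K) : ∃ m, (f i).1 m = false := by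
    simpa [funext_iff] using (f i).2
  refine ⟨fun m i => vecCons true (f i).1 m,
    fun i j hij b => exists_vecCons_true_ne_apply hp hfalse hij b, fun i => ⟨?_, 0, rfl⟩⟩
  obtain ⟨m, hm⟩ := hfalse i
  exact ⟨m.succ, by simpa using hm⟩

theorem log_regimes_suffice_for_distinct_patterns (K : ℕ) (hK : 1 ≤ K) :
    ∃ E : Fin (Nat.log 2 K + 2) → Fin K → Bool,
      (∀ i j : Fin K, i ≠ j → ∀ b : Bool → Bool, ∃ m, E m i ≠ b (E m j)) ∧
      (∀ i : Fin K, (∃ m, E m i = false) ∧ (∃ m', E m' i = true)) :=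
  log_regimes_suffice_for_distinct_patterns_general K
end
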